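/- arXiv:1910.06576 — 3 statements merged into one kernel-verified Lean document; each statement's English description precedes it below -/
import Mathlib

section
/- Label substitution is height-preserving admissible in G3Int: if R, Γ ⇒ Δ has a derivation of height at most n in G3Int, then R[w/v], Γ[w/v] ⇒ Δ[w/v] has a derivation of height at most n, where [w/v] replaces all occurrences of label v by label w. -/
/-- Formulae of propositional intuitionistic logic. -/
inductive Fml : Type
  | atom : ℕ → Fml
  | bot  : Fml
  | and  : Fml → Fml → Fml
  | or   : Fml → Fml → Fml
  | imp  : Fml → Fml → Fml

/-- Multisets of relational atoms `w ≤ v` (labels are natural numbers). -/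
abbrev RAtoms := Multiset (ℕ × ℕ)
/-- Multisets of labelled formulae `w : A`. -/
abbrev LFml := Multiset (ℕ × Fml)

/-- The label `v` does not occur in the sequent `R, Γ ⇒ Δ`. -/
def freshL (v : ℕ) (R : RAtoms) (Γ Δ : LFml) : Prop :=
  (∀ q ∈ R, v ≠ q.1 ∧ v ≠ q.2) ∧ (∀ q ∈ Γ, v ≠ q.1) ∧ (∀ q ∈ Δ, v ≠ q.1)

/-- `G3Int n R Γ Δ`: the labelled sequent `R, Γ ⇒ Δ` has a derivation of
height at most `n` in the labelled calculus `G3Int`. -/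
inductive G3Int : ℕ → RAtoms → LFml → LFml → Prop
  | id (n : ℕ) (R : RAtoms) (Γ Δ : LFml) (w v p : ℕ) :
      G3Int n ((w, v) ::ₘ R) ((w, Fml.atom p) ::ₘ Γ) ((v, Fml.atom p) ::ₘ Δ)
  | botL (n : ℕ) (R : RAtoms) (Γ Δ : LFml) (w : ℕ) :
      G3Int n R ((w, Fml.bot) ::ₘ Γ) Δ
  | andL {n R Γ Δ} (w : ℕ) (A B : Fml) :
      G3Int n R ((w, A) ::ₘ (w, B) ::ₘ Γ) Δ →
      G3Int (n + 1) R ((w, Fml.and A B) ::ₘ Γ) Δ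
  | andR {n R Γ Δ} (w : ℕ) (A B : Fml) :
      G3Int n R Γ ((w, A) ::ₘ Δ) → G3Int n R Γ ((w, B) ::ₘ Δ) →
      G3Int (n + 1) R Γ ((w, Fml.and A B) ::ₘ Δ)
  | orL {n R Γ Δ} (w : ℕ) (A B : Fml) :
      G3Int n R ((w, A) ::ₘ Γ) Δ → G3Int n R ((w, B) ::ₘ Γ) Δ →
      G3Int (n + 1) R ((w, Fml.or A B) ::ₘ Γ) Δ
  | orR {n R Γ Δ} (w : ℕ) (A B : Fml) :
      G3Int n R Γ ((w, A) ::ₘ (w, B) ::ₘ Δ) →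
      G3Int (n + 1) R Γ ((w, Fml.or A B) ::ₘ Δ)
  | impL {n R Γ Δ} (w v : ℕ) (A B : Fml) :
      G3Int n ((w, v) ::ₘ R) ((w, Fml.imp A B) ::ₘ Γ) ((v, A) ::ₘ Δ) →
      G3Int n ((w, v) ::ₘ R) ((w, Fml.imp A B) ::ₘ (v, B) ::ₘ Γ) Δ →
      G3Int (n + 1) ((w, v) ::ₘ R) ((w, Fml.imp A B) ::ₘ Γ) Δ
  | impR {n R Γ Δ} (w v : ℕ) (A B : Fml) :
      freshL v R Γ ((w, Fml.imp A B) ::ₘ Δ) →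
      G3Int n ((w, v) ::ₘ R) ((v, A) ::ₘ Γ) ((v, B) ::ₘ Δ) →
      G3Int (n + 1) R Γ ((w, Fml.imp A B) ::ₘ Δ)
  | ref {n R Γ Δ} (w : ℕ) :
      G3Int n ((w, w) ::ₘ R) Γ Δ → G3Int (n + 1) R Γ Δ
  | tra {n R Γ Δ} (w v u : ℕ) :
      G3Int n ((w, v) ::ₘ (v, u) ::ₘ (w, u) ::ₘ R) Γ Δ →
      G3Int (n + 1) ((w, v) ::ₘ (v, u) ::ₘ R) Γ Δ

/-- Derivability (of some height) in `G3Int`. -/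
def G3IntDer (R : RAtoms) (Γ Δ : LFml) : Prop := ∃ n, G3Int n R Γ Δ

/-- The label substitution `[w/v]` on labels. -/
def lsub (w v x : ℕ) : ℕ := if x = v then w else x


lemma lsub_ne {w v x : ℕ} (h : x ≠ v) : lsub w v x = x := if_neg h

lemma lsub_self (w v : ℕ) : lsub w v v = w := if_pos rfl

lemma mapR_id {v' u : ℕ} {R : RAtoms} (h : ∀ q ∈ R, v' ≠ q.1 ∧ v' ≠ q.2) :
    R.map (fun q => (lsub u v' q.1, lsub u v' q.2)) = R := by
  conv_rhs => rw [← Multiset.map_id' R]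
  exact Multiset.map_congr rfl (fun q hq => by
    rcases h q hq with ⟨h1, h2⟩
    simp [lsub_ne (Ne.symm h1), lsub_ne (Ne.symm h2)])

lemma mapL_id {v' u : ℕ} {Γ : LFml} (h : ∀ q ∈ Γ, v' ≠ q.1) :
    Γ.map (fun q => (lsub u v' q.1, q.2)) = Γ := by
  conv_rhs => rw [← Multiset.map_id' Γ]
  exact Multiset.map_congr rfl (fun q hq => by
    simp [lsub_ne (Ne.symm (h q hq))])

/-- Label substitution is height-preserving admissible in `G3Int`: if
`R, Γ ⇒ Δ` has a derivation of height at most `n`, then so does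
`R[w/v], Γ[w/v] ⇒ Δ[w/v]`. -/
theorem stmt2 (n : ℕ) (R : RAtoms) (Γ Δ : LFml) (w v : ℕ)
    (h : G3Int n R Γ Δ) :
    G3Int n (R.map (fun q => (lsub w v q.1, lsub w v q.2)))
      (Γ.map (fun q => (lsub w v q.1, q.2)))
      (Δ.map (fun q => (lsub w v q.1, q.2))) := by

  induction n using Nat.strong_induction_on generalizing R Γ Δ w v with
  | _ n IH =>
  cases h with
  | id m R0 Γ0 Δ0 w0 v0 p =>
      simp only [Multiset.map_cons]
      exact G3Int.id n _ _ _ _ _ p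
  | botL m R0 Γ0 Δ0 w0 =>
      simp only [Multiset.map_cons]
      exact G3Int.botL n _ _ _ _
  | andL w0 A B hp =>
      simp only [Multiset.map_cons]
      have := IH _ (Nat.lt_succ_self _) _ _ _ w v hp
      simp only [Multiset.map_cons] at this
      exact G3Int.andL _ A B this
  | andR w0 A B h1 h2 =>
      simp only [Multiset.map_cons]
      have i1 := IH _ (Nat.lt_succ_self _) _ _ _ w v h1
      have i2 := IH _ (Nat.lt_succ_self _) _ _ _ w v h2
      simp only [Multiset.map_cons] at i1 i2
      exact G3Int.andR _ A B i1 i2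
  | orL w0 A B h1 h2 =>
      simp only [Multiset.map_cons]
      have i1 := IH _ (Nat.lt_succ_self _) _ _ _ w v h1
      have i2 := IH _ (Nat.lt_succ_self _) _ _ _ w v h2
      simp only [Multiset.map_cons] at i1 i2
      exact G3Int.orL _ A B i1 i2
  | orR w0 A B hp =>
      simp only [Multiset.map_cons]
      have := IH _ (Nat.lt_succ_self _) _ _ _ w v hp
      simp only [Multiset.map_cons] at this
      exact G3Int.orR _ A B this
  | impL w0 v0 A B h1 h2 =>
      simp only [Multiset.map_cons]
      have i1 := IH _ (Nat.lt_succ_self _) _ _ _ w v h1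
      have i2 := IH _ (Nat.lt_succ_self _) _ _ _ w v h2
      simp only [Multiset.map_cons] at i1 i2
      exact G3Int.impL _ _ A B i1 i2
  | impR w0 v' A B hf hp =>
      rename_i m Δ0
      simp only [Multiset.map_cons]
      obtain ⟨hfR, hfΓ, hfΔ'⟩ := hf
      have hw0 : v' ≠ w0 := (hfΔ' (w0, Fml.imp A B) (Multiset.mem_cons_self _ _))
      have hfΔ : ∀ q ∈ Δ0, v' ≠ q.1 :=
        fun q hq => hfΔ' q (Multiset.mem_cons_of_mem hq)
      -- choose a fresh label u
      set S : Multiset ℕ :=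
        R.map Prod.fst + R.map Prod.snd + Γ.map Prod.fst + Δ0.map Prod.fst with hS
      set u : ℕ := S.sum + w + v + w0 + 1 with hu
      have hufresh : ∀ x ∈ S, u ≠ x := by
        intro x hx
        have : x ≤ S.sum := Multiset.single_le_sum (fun _ _ => Nat.zero_le _) _ hx
        omega
      have huv : u ≠ v := by omega
      have huw : u ≠ w := by omega
      have huw0 : u ≠ w0 := by omega
      have memS1 : ∀ p ∈ R, p.1 ∈ S := fun p hp' => by
        rw [hS]; repeat rw [Multiset.mem_add]
        exact Or.inl (Or.inl (Or.inl (Multiset.mem_map_of_mem _ hp')))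
      have memS2 : ∀ p ∈ R, p.2 ∈ S := fun p hp' => by
        rw [hS]; repeat rw [Multiset.mem_add]
        exact Or.inl (Or.inl (Or.inr (Multiset.mem_map_of_mem _ hp')))
      have memS3 : ∀ p ∈ Γ, p.1 ∈ S := fun p hp' => by
        rw [hS]; repeat rw [Multiset.mem_add]
        exact Or.inl (Or.inr (Multiset.mem_map_of_mem _ hp'))
      have memS4 : ∀ p ∈ Δ0, p.1 ∈ S := fun p hp' => by
        rw [hS]; repeat rw [Multiset.mem_add]
        exact Or.inr (Multiset.mem_map_of_mem _ hp')
      have hsub : ∀ x ∈ S, u ≠ lsub w v x := by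
        intro x hx
        unfold lsub; split
        · exact huw
        · exact hufresh x hx
      -- step 1: substitute [u/v'] in the premise
      have h1 := IH _ (Nat.lt_succ_self _) _ _ _ u v' hp
      simp only [Multiset.map_cons] at h1
      rw [mapR_id hfR, mapL_id hfΓ, mapL_id hfΔ,
        lsub_ne (Ne.symm hw0), lsub_self] at h1
      -- step 2: substitute [w/v]
      have h2 := IH _ (Nat.lt_succ_self _) _ _ _ w v h1
      simp only [Multiset.map_cons, lsub_ne huv] at h2
      refine G3Int.impR _ u A B ?_ h2
      refine ⟨?_, ?_, ?_⟩
      · intro q hq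
        rw [Multiset.mem_map] at hq
        obtain ⟨p, hp', rfl⟩ := hq
        exact ⟨hsub _ (memS1 p hp'), hsub _ (memS2 p hp')⟩
      · intro q hq
        rw [Multiset.mem_map] at hq
        obtain ⟨p, hp', rfl⟩ := hq
        exact hsub _ (memS3 p hp')
      · intro q hq
        rw [Multiset.mem_cons] at hq
        rcases hq with rfl | hq
        · show u ≠ lsub w v w0
          unfold lsub; split
          · exact huw
          · exact huw0
        · rw [Multiset.mem_map] at hq
          obtain ⟨p, hp', rfl⟩ := hq
          exact hsub _ (memS4 p hp')
  | ref w0 hp =>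
      have := IH _ (Nat.lt_succ_self _) _ _ _ w v hp
      simp only [Multiset.map_cons] at this
      exact G3Int.ref _ this
  | tra w0 v0 u0 hp =>
      simp only [Multiset.map_cons]
      have := IH _ (Nat.lt_succ_self _) _ _ _ w v hp
      simp only [Multiset.map_cons] at this
      exact G3Int.tra _ _ _ this
end

section
/- Weakening is height-preserving admissible in G3Int: if R, Γ ⇒ Δ has a derivation of height at most n, then R', R, Γ', Γ ⇒ Δ', Δ has a derivation of height at most n, for any additional multisets R' of relational atoms and Γ', Δ' of labelled formulae. -/
def mapR (σ : ℕ → ℕ) (R : RAtoms) : RAtoms := R.map fun q => (σ q.1, σ q.2)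
def mapF (σ : ℕ → ℕ) (Γ : LFml) : LFml := Γ.map fun q => (σ q.1, q.2)

/-- A strict bound on all labels occurring in a sequent. -/
def bnd (R : RAtoms) (Γ Δ : LFml) : ℕ :=
  (R.map fun q => max q.1 q.2).sup ⊔ (Γ.map Prod.fst).sup ⊔ (Δ.map Prod.fst).sup

lemma fresh_bnd (R : RAtoms) (Γ Δ : LFml) : freshL (bnd R Γ Δ + 1) R Γ Δ := by
  refine ⟨fun q hq => ?_, fun q hq => ?_, fun q hq => ?_⟩
  · have h := Multiset.le_sup (Multiset.mem_map_of_mem (fun q => max q.1 q.2) hq)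
    have h1 : q.1 ≤ bnd R Γ Δ := le_trans (le_trans (le_max_left _ _) h)
      (le_trans le_sup_left le_sup_left)
    have h2 : q.2 ≤ bnd R Γ Δ := le_trans (le_trans (le_max_right _ _) h)
      (le_trans le_sup_left le_sup_left)
    omega
  · have h := Multiset.le_sup (Multiset.mem_map_of_mem Prod.fst hq)
    have h1 : q.1 ≤ bnd R Γ Δ := le_trans h (le_trans le_sup_right le_sup_left)
    omega
  · have h := Multiset.le_sup (Multiset.mem_map_of_mem Prod.fst hq)
    have h1 : q.1 ≤ bnd R Γ Δ := le_trans h le_sup_right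
    omega

/-- Combined substitution + weakening, height-preserving. -/
theorem wksub {n R Γ Δ} (h : G3Int n R Γ Δ) :
    ∀ σ R' Γ' Δ', G3Int n (R' + mapR σ R) (Γ' + mapF σ Γ) (Δ' + mapF σ Δ) := by
  induction h with
  | id n R Γ Δ w v p =>
      intro σ R' Γ' Δ'
      simp only [mapR, mapF, Multiset.map_cons, Multiset.add_cons]
      exact G3Int.id n _ _ _ (σ w) (σ v) p
  | botL n R Γ Δ w =>
      intro σ R' Γ' Δ'
      simp only [mapF, Multiset.map_cons, Multiset.add_cons]
      exact G3Int.botL n _ _ _ (σ w)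
  | andL w A B h ih =>
      intro σ R' Γ' Δ'
      simp only [mapF, Multiset.map_cons, Multiset.add_cons]
      exact G3Int.andL (σ w) A B (by simpa [mapF, Multiset.map_cons, Multiset.add_cons] using ih σ R' Γ' Δ')
  | andR w A B h1 h2 ih1 ih2 =>
      intro σ R' Γ' Δ'
      simp only [mapF, Multiset.map_cons, Multiset.add_cons]
      exact G3Int.andR (σ w) A B
        (by simpa [mapF, Multiset.map_cons, Multiset.add_cons] using ih1 σ R' Γ' Δ')
        (by simpa [mapF, Multiset.map_cons, Multiset.add_cons] using ih2 σ R' Γ' Δ')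
  | orL w A B h1 h2 ih1 ih2 =>
      intro σ R' Γ' Δ'
      simp only [mapF, Multiset.map_cons, Multiset.add_cons]
      exact G3Int.orL (σ w) A B
        (by simpa [mapF, Multiset.map_cons, Multiset.add_cons] using ih1 σ R' Γ' Δ')
        (by simpa [mapF, Multiset.map_cons, Multiset.add_cons] using ih2 σ R' Γ' Δ')
  | orR w A B h ih =>
      intro σ R' Γ' Δ'
      simp only [mapF, Multiset.map_cons, Multiset.add_cons]
      exact G3Int.orR (σ w) A B (by simpa [mapF, Multiset.map_cons, Multiset.add_cons] using ih σ R' Γ' Δ')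
  | impL w v A B h1 h2 ih1 ih2 =>
      intro σ R' Γ' Δ'
      simp only [mapR, mapF, Multiset.map_cons, Multiset.add_cons]
      exact G3Int.impL (σ w) (σ v) A B
        (by simpa [mapR, mapF, Multiset.map_cons, Multiset.add_cons] using ih1 σ R' Γ' Δ')
        (by simpa [mapR, mapF, Multiset.map_cons, Multiset.add_cons] using ih2 σ R' Γ' Δ')
  | impR w v A B hf h ih =>
      rename_i n R Γ Δ
      intro σ R' Γ' Δ'
      -- fresh eigenvariable
      set v' := bnd (R' + mapR σ R) (Γ' + mapF σ Γ)
        ((σ w, Fml.imp A B) ::ₘ (Δ' + mapF σ Δ)) + 1 with hv'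
      have hfr := fresh_bnd (R' + mapR σ R) (Γ' + mapF σ Γ)
        ((σ w, Fml.imp A B) ::ₘ (Δ' + mapF σ Δ))
      rw [← hv'] at hfr
      set σ' : ℕ → ℕ := fun x => if x = v then v' else σ x with hσ'
      have hwv : v ≠ w := hf.2.2 _ (Multiset.mem_cons_self _ _)
      have hσ'v : σ' v = v' := by simp [hσ']
      have hσ'w : σ' w = σ w := by simp [hσ', Ne.symm hwv]
      have eR : mapR σ' R = mapR σ R := Multiset.map_congr rfl (fun q hq => by
        obtain ⟨h1, h2⟩ := hf.1 q hq
        simp [hσ', Ne.symm h1, Ne.symm h2])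
      have eΓ : mapF σ' Γ = mapF σ Γ := Multiset.map_congr rfl (fun q hq => by
        have h1 := hf.2.1 q hq
        simp [hσ', Ne.symm h1])
      have eΔ : mapF σ' Δ = mapF σ Δ := Multiset.map_congr rfl (fun q hq => by
        have h1 := hf.2.2 q (Multiset.mem_cons_of_mem hq)
        simp [hσ', Ne.symm h1])
      have hp := ih σ' R' Γ' Δ'
      simp only [mapR, mapF, Multiset.map_cons, Multiset.add_cons, hσ'v, hσ'w] at hp
      rw [show (Multiset.map (fun q => ((σ' q.1 : ℕ), (σ' q.2 : ℕ))) R) = mapR σ R from eR,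
        show (Multiset.map (fun q => ((σ' q.1 : ℕ), (q.2 : Fml))) Γ) = mapF σ Γ from eΓ,
        show (Multiset.map (fun q => ((σ' q.1 : ℕ), (q.2 : Fml))) Δ) = mapF σ Δ from eΔ] at hp
      simp only [mapF, Multiset.map_cons, Multiset.add_cons]
      exact G3Int.impR (σ w) v' A B hfr hp
  | ref w h ih =>
      intro σ R' Γ' Δ'
      exact G3Int.ref (σ w) (by simpa [mapR, Multiset.map_cons, Multiset.add_cons] using ih σ R' Γ' Δ')
  | tra w v u h ih =>
      intro σ R' Γ' Δ'
      simp only [mapR, Multiset.map_cons, Multiset.add_cons]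
      exact G3Int.tra (σ w) (σ v) (σ u)
        (by simpa [mapR, Multiset.map_cons, Multiset.add_cons] using ih σ R' Γ' Δ')

/-- Weakening is height-preserving admissible in `G3Int`: if `R, Γ ⇒ Δ` has a
derivation of height at most `n`, then `R', R, Γ', Γ ⇒ Δ', Δ` has a derivation
of height at most `n`. -/
theorem stmt3 (n : ℕ) (R R' : RAtoms) (Γ Δ Γ' Δ' : LFml)
    (h : G3Int n R Γ Δ) :
    G3Int n (R' + R) (Γ' + Γ) (Δ' + Δ) := by
  have := wksub h id R' Γ' Δ'
  simpa [mapR, mapF, Multiset.map_id'] using this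
end

section
/- The rule (ref) is eliminable in the calculus G3Int + {(id*), (⊃_l*)} − (tra): every derivation in G3Int extended with (id*) and (⊃_l*) but without (tra) can be transformed into a derivation of the same end sequent that contains no applications of (ref). -/
/-- Derivability in `G3Int` extended with `(id*)`, `(⊃_l*)` and (when
`useLift = true`) the rule `(lift)`; the structural rules `(ref)` and `(tra)`
are available exactly when the corresponding flag is `true`. -/
inductive DerE (useRef useTra useLift : Bool) : RAtoms → LFml → LFml → Prop
  | id (R : RAtoms) (Γ Δ : LFml) (w v p : ℕ) :
      DerE useRef useTra useLift ((w, v) ::ₘ R)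
        ((w, Fml.atom p) ::ₘ Γ) ((v, Fml.atom p) ::ₘ Δ)
  | idStar (R : RAtoms) (Γ Δ : LFml) (w p : ℕ) :
      DerE useRef useTra useLift R ((w, Fml.atom p) ::ₘ Γ) ((w, Fml.atom p) ::ₘ Δ)
  | botL (R : RAtoms) (Γ Δ : LFml) (w : ℕ) :
      DerE useRef useTra useLift R ((w, Fml.bot) ::ₘ Γ) Δ
  | andL {R Γ Δ} (w : ℕ) (A B : Fml) :
      DerE useRef useTra useLift R ((w, A) ::ₘ (w, B) ::ₘ Γ) Δ →
      DerE useRef useTra useLift R ((w, Fml.and A B) ::ₘ Γ) Δ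
  | andR {R Γ Δ} (w : ℕ) (A B : Fml) :
      DerE useRef useTra useLift R Γ ((w, A) ::ₘ Δ) →
      DerE useRef useTra useLift R Γ ((w, B) ::ₘ Δ) →
      DerE useRef useTra useLift R Γ ((w, Fml.and A B) ::ₘ Δ)
  | orL {R Γ Δ} (w : ℕ) (A B : Fml) :
      DerE useRef useTra useLift R ((w, A) ::ₘ Γ) Δ →
      DerE useRef useTra useLift R ((w, B) ::ₘ Γ) Δ →
      DerE useRef useTra useLift R ((w, Fml.or A B) ::ₘ Γ) Δ
  | orR {R Γ Δ} (w : ℕ) (A B : Fml) :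
      DerE useRef useTra useLift R Γ ((w, A) ::ₘ (w, B) ::ₘ Δ) →
      DerE useRef useTra useLift R Γ ((w, Fml.or A B) ::ₘ Δ)
  | impL {R Γ Δ} (w v : ℕ) (A B : Fml) :
      DerE useRef useTra useLift ((w, v) ::ₘ R) ((w, Fml.imp A B) ::ₘ Γ) ((v, A) ::ₘ Δ) →
      DerE useRef useTra useLift ((w, v) ::ₘ R) ((w, Fml.imp A B) ::ₘ (v, B) ::ₘ Γ) Δ →
      DerE useRef useTra useLift ((w, v) ::ₘ R) ((w, Fml.imp A B) ::ₘ Γ) Δ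
  | impLStar {R Γ Δ} (w : ℕ) (A B : Fml) :
      DerE useRef useTra useLift R ((w, Fml.imp A B) ::ₘ Γ) ((w, A) ::ₘ Δ) →
      DerE useRef useTra useLift R ((w, Fml.imp A B) ::ₘ (w, B) ::ₘ Γ) Δ →
      DerE useRef useTra useLift R ((w, Fml.imp A B) ::ₘ Γ) Δ
  | impR {R Γ Δ} (w v : ℕ) (A B : Fml) :
      freshL v R Γ ((w, Fml.imp A B) ::ₘ Δ) →
      DerE useRef useTra useLift ((w, v) ::ₘ R) ((v, A) ::ₘ Γ) ((v, B) ::ₘ Δ) →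
      DerE useRef useTra useLift R Γ ((w, Fml.imp A B) ::ₘ Δ)
  | lift {R Γ Δ} (w u : ℕ) (A : Fml) :
      useLift = true →
      DerE useRef useTra useLift ((w, u) ::ₘ R) ((w, A) ::ₘ (u, A) ::ₘ Γ) Δ →
      DerE useRef useTra useLift ((w, u) ::ₘ R) ((w, A) ::ₘ Γ) Δ
  | ref {R Γ Δ} (w : ℕ) :
      useRef = true →
      DerE useRef useTra useLift ((w, w) ::ₘ R) Γ Δ →
      DerE useRef useTra useLift R Γ Δ
  | tra {R Γ Δ} (w v u : ℕ) :
      useTra = true →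
      DerE useRef useTra useLift ((w, v) ::ₘ (v, u) ::ₘ (w, u) ::ₘ R) Γ Δ →
      DerE useRef useTra useLift ((w, v) ::ₘ (v, u) ::ₘ R) Γ Δ

/-- Deleting a reflexive relational atom preserves derivability in the
ref/tra-free calculus. -/
lemma delRefl : ∀ {R : RAtoms} {Γ Δ : LFml}, DerE false false false R Γ Δ →
    ∀ (w : ℕ) (R' : RAtoms), R = (w, w) ::ₘ R' → DerE false false false R' Γ Δ := by
  intro R Γ Δ h
  induction h with
  | id R Γ Δ a b p =>
    intro w R' hR
    rcases Multiset.cons_eq_cons.mp hR with ⟨h1, h2⟩ | ⟨_, cs, h1, h2⟩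
    · obtain ⟨rfl, rfl⟩ : a = w ∧ b = w := Prod.mk.injEq .. ▸ h1
      subst h2
      exact DerE.idStar _ _ _ _ p
    · subst h2
      exact DerE.id cs Γ Δ a b p
  | idStar R Γ Δ a p => intro w R' hR; exact DerE.idStar R' Γ Δ a p
  | botL R Γ Δ a => intro w R' hR; exact DerE.botL R' Γ Δ a
  | andL a A B _ ih => intro w R' hR; exact DerE.andL a A B (ih w R' hR)
  | andR a A B _ _ ih1 ih2 =>
      intro w R' hR; exact DerE.andR a A B (ih1 w R' hR) (ih2 w R' hR)
  | orL a A B _ _ ih1 ih2 =>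
      intro w R' hR; exact DerE.orL a A B (ih1 w R' hR) (ih2 w R' hR)
  | orR a A B _ ih => intro w R' hR; exact DerE.orR a A B (ih w R' hR)
  | impL a b A B _ _ ih1 ih2 =>
    intro w R' hR
    rcases Multiset.cons_eq_cons.mp hR with ⟨h1, h2⟩ | ⟨_, cs, h1, h2⟩
    · obtain ⟨rfl, rfl⟩ : a = w ∧ b = w := Prod.mk.injEq .. ▸ h1
      exact DerE.impLStar _ A B (ih1 _ _ hR) (ih2 _ _ hR)
    · subst h2
      subst h1
      have e := Multiset.cons_swap (a, b) (w, w) cs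
      exact DerE.impL a b A B (ih1 w _ e) (ih2 w _ e)
  | impLStar a A B _ _ ih1 ih2 =>
      intro w R' hR; exact DerE.impLStar a A B (ih1 w R' hR) (ih2 w R' hR)
  | impR a v A B fr _ ih =>
    intro w R' hR
    refine DerE.impR a v A B ?_ (ih w ((a, v) ::ₘ R') (by rw [hR]; exact Multiset.cons_swap _ _ _))
    exact ⟨fun q hq => fr.1 q (hR ▸ Multiset.mem_cons_of_mem hq), fr.2⟩
  | lift _ _ _ hflag _ _ => exact absurd hflag (by simp)
  | ref _ hflag _ _ => exact absurd hflag (by simp)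
  | tra _ _ _ hflag _ _ => exact absurd hflag (by simp)

/-- `(ref)` is eliminable in `G3Int + {(id*), (⊃_l*)} − (tra)`: every
derivation in `G3Int` extended with `(id*)` and `(⊃_l*)`, without `(tra)`,
can be transformed into one of the same end sequent without `(ref)`. -/
theorem stmt8 (R : RAtoms) (Γ Δ : LFml)
    (h : DerE true false false R Γ Δ) :
    DerE false false false R Γ Δ := by
  induction h with
  | id R Γ Δ w v p => exact DerE.id R Γ Δ w v p
  | idStar R Γ Δ w p => exact DerE.idStar R Γ Δ w p
  | botL R Γ Δ w => exact DerE.botL R Γ Δ w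
  | andL w A B _ ih => exact DerE.andL w A B ih
  | andR w A B _ _ ih1 ih2 => exact DerE.andR w A B ih1 ih2
  | orL w A B _ _ ih1 ih2 => exact DerE.orL w A B ih1 ih2
  | orR w A B _ ih => exact DerE.orR w A B ih
  | impL w v A B _ _ ih1 ih2 => exact DerE.impL w v A B ih1 ih2
  | impLStar w A B _ _ ih1 ih2 => exact DerE.impLStar w A B ih1 ih2
  | impR w v A B fr _ ih => exact DerE.impR w v A B fr ih
  | lift _ _ _ hflag _ _ => exact absurd hflag (by simp)
  | ref w _ _ ih => exact delRefl ih w _ rfl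
  | tra _ _ _ hflag _ _ => exact absurd hflag (by simp)
end
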